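/- Let L/K be a cyclic Galois extension of even degree n = 2m+2 with Galois group generated by σ, and for 1 ≤ i ≤ m+1 set A^i = {f_{b,σ^i} : b ∈ L} ⊆ Alt(L). Then for any integer k with 1 ≤ k ≤ m, every nonzero element of the nk-dimensional subspace A^1 ⊕ ⋯ ⊕ A^k of Alt(L) has rank at least n − 2k. -/

import Mathlib

variable {K L : Type*} [Field K] [Field L] [Algebra K L]

/-- The alternating bilinear form `f_{b,σ}(x,y) = Tr^L_K (b * (x * σ y - σ x * y))`,
where `Tr^L_K` is the trace form of the extension `L/K`. -/
noncomputable def galoisAltForm (b : L) (σ : L ≃ₐ[K] L) : (L →ₗ[K] L →ₗ[K] K) :=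
  LinearMap.mk₂ K (fun x y => Algebra.trace K L (b * (x * σ y - σ x * y)))
    (fun x x' y => by
      try dsimp only
      rw [show b * ((x + x') * σ y - σ (x + x') * y)
            = b * (x * σ y - σ x * y) + b * (x' * σ y - σ x' * y) by
          rw [map_add σ]; ring, map_add])
    (fun a x y => by
      try dsimp only
      rw [show b * ((a • x) * σ y - σ (a • x) * y)
            = a • (b * (x * σ y - σ x * y)) by
          rw [map_smul σ]
          simp only [smul_sub, smul_mul_assoc, mul_smul_comm, mul_sub], map_smul])
    (fun x y y' => by
      try dsimp only
      rw [show b * (x * σ (y + y') - σ x * (y + y'))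
            = b * (x * σ y - σ x * y) + b * (x * σ y' - σ x * y') by
          rw [map_add σ]; ring, map_add])
    (fun a x y => by
      try dsimp only
      rw [show b * (x * σ (a • y) - σ x * (a • y))
            = a • (b * (x * σ y - σ x * y)) by
          rw [map_smul σ]
          simp only [smul_sub, smul_mul_assoc, mul_smul_comm, mul_sub], map_smul])

/-- `b ↦ f_{b,σ}` as a `K`-linear map. -/
noncomputable def galoisAltFormL (σ : L ≃ₐ[K] L) : L →ₗ[K] (L →ₗ[K] L →ₗ[K] K) where
  toFun b := galoisAltForm b σ
  map_add' b b' := by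
    ext x y
    simp only [galoisAltForm, LinearMap.mk₂_apply, LinearMap.add_apply]
    rw [← map_add, add_mul]
  map_smul' a b := by
    ext x y
    simp only [galoisAltForm, LinearMap.mk₂_apply, LinearMap.smul_apply, RingHom.id_apply]
    rw [← map_smul, smul_mul_assoc]

/-- The rank of a bilinear form on `L`: `dim_K L` minus the dimension of its radical
`{x : L | ∀ y, f x y = 0}` (which is the kernel of `f` viewed as a map `L →ₗ[K] (L →ₗ[K] K)`). -/
noncomputable def formRank (f : (L →ₗ[K] L →ₗ[K] K)) : ℕ :=
  Module.finrank K L - Module.finrank K (LinearMap.ker f)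

/-- The space `Alt(L)` of all alternating `K`-bilinear forms on `L`. -/
def altSubspace (K L : Type*) [Field K] [Field L] [Algebra K L] :
    Submodule K (L →ₗ[K] L →ₗ[K] K) where
  carrier := {f | ∀ x : L, f x x = 0}
  add_mem' hf hg x := by simp [hf x, hg x]
  zero_mem' x := rfl
  smul_mem' a f hf x := by simp [hf x]

/-!
For `b ∈ Lᵏ` put `Φ b = ∑ᵢ f_{bᵢ,σ^{i+1}}`. Moving powers of `σ` across the trace gives
`Φ b (x, y) = Tr(T x · σᵏ y)` with `T = ∑_{j ≤ 2k} cⱼ σʲ`, where `c_{k+1+i} = -σᵏ(bᵢ)`, so `T ≠ 0`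
when `b ≠ 0`. As the trace form is nondegenerate, the radical of `Φ b` is `ker T`.

Since `σ` has fixed field `K`, such a `σ`-polynomial of degree `d` has a kernel of `K`-dimension
at most `d`: for `0 ≠ u ∈ ker T`, the operator `x ↦ T (u x)` is again a `σ`-polynomial whose
coefficient polynomial has `1` as a root, so it factors as `S ∘ (σ - 1)` with `deg S = d - 1`,
and `ker (σ - 1) = K`. Hence `Φ b` has rank at least `n - 2k`, and as `2k < n` the map `Φ` is
injective, so its range `A¹ + ⋯ + Aᵏ` has dimension `nk`.
-/

open Polynomial Module LinearMap

theorem LinearMap.finrank_ker_comp_le {K V W U : Type*} [Field K] [AddCommGroup V] [Module K V]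
    [FiniteDimensional K V] [AddCommGroup W] [Module K W] [FiniteDimensional K W]
    [AddCommGroup U] [Module K U] (A : W →ₗ[K] U) (B : V →ₗ[K] W) :
    finrank K (ker (A ∘ₗ B)) ≤ finrank K (ker A) + finrank K (ker B) := by
  have hB := (B.domRestrict (ker (A ∘ₗ B))).finrank_range_add_finrank_ker
  have h_range : finrank K (range (B.domRestrict (ker (A ∘ₗ B)))) ≤ finrank K (ker A) :=
    Submodule.finrank_mono (by rintro _ ⟨x, rfl⟩; exact x.2)
  have h_ker : finrank K (ker (B.domRestrict (ker (A ∘ₗ B)))) ≤ finrank K (ker B) := by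
    rw [ker_domRestrict, (Submodule.equivSubtypeMap _ _).finrank_eq,
      Submodule.map_comap_subtype]
    exact Submodule.finrank_mono inf_le_right
  omega

theorem mem_range_algebraMap_of_apply_eq [FiniteDimensional K L] [IsGalois K L]
    {σ : L ≃ₐ[K] L} (hgen : ∀ τ : L ≃ₐ[K] L, τ ∈ Subgroup.zpowers σ) {x : L} (hx : σ x = x) :
    x ∈ Set.range (algebraMap K L) := by
  have hσ : Subgroup.zpowers σ ≤ MulAction.stabilizer (L ≃ₐ[K] L) x :=
    Subgroup.zpowers_le.mpr hx
  exact (IsGalois.mem_range_algebraMap_iff_fixed x).mpr fun τ => hσ (hgen τ)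

theorem LinearMap.range_lsum {R M N ι : Type*} [CommSemiring R] [AddCommMonoid M] [Module R M]
    [AddCommMonoid N] [Module R N] [Fintype ι] [DecidableEq ι] (f : ι → M →ₗ[R] N) :
    range (lsum R (fun _ => M) R f) = ⨆ i, range (f i) := by
  rw [range_eq_map, ← iSup_range_single, Submodule.map_iSup]
  refine iSup_congr fun i => ?_
  rw [← range_comp]
  congr 1
  ext x
  exact lsum_piSingle R _ R f i x

theorem ker_eq_of_apply_eq_trace [FiniteDimensional K L] [Algebra.IsSeparable K L]
    {f : L →ₗ[K] L →ₗ[K] K} {R : L →ₗ[K] L} (τ : L ≃ₐ[K] L)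
    (hf : ∀ x y, f x y = Algebra.trace K L (R x * τ y)) : ker f = ker R := by
  ext x
  simp only [mem_ker]
  constructor
  · intro hx
    refine (traceForm_nondegenerate K L).1 (R x) fun z => ?_
    rw [Algebra.traceForm_apply, ← τ.apply_symm_apply z, ← hf, hx, LinearMap.zero_apply]
  · intro hx
    ext y
    simp [hf, hx]

/-- The `σ`-polynomial `x ↦ ∑ⱼ pⱼ σʲ(x)` with coefficient polynomial `p`. -/
noncomputable def skewEval (σ : L ≃ₐ[K] L) : L[X] →ₗ[L] L →ₗ[K] L :=
  lsum fun j => smulRight LinearMap.id (σ ^ j).toLinearMap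

noncomputable def skewTwist (σ : L ≃ₐ[K] L) (u : L) : L[X] →ₗ[L] L[X] :=
  lsum fun j => monomial j ∘ₗ LinearMap.mulRight L ((σ ^ j) u)

section
variable (σ : L ≃ₐ[K] L)

@[simp]
theorem skewEval_monomial (j : ℕ) (a : L) :
    skewEval σ (monomial j a) = a • (σ ^ j).toLinearMap := by
  simp [skewEval]

theorem skewEval_mul_X (p : L[X]) : skewEval σ (p * X) = skewEval σ p ∘ₗ σ.toLinearMap := by
  induction p using Polynomial.induction_on' with
  | add p q hp hq => simp [add_mul, hp, hq, LinearMap.add_comp]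
  | monomial j a =>
    ext x
    simp [pow_succ]

theorem skewEval_apply_one (p : L[X]) : skewEval σ p 1 = p.eval 1 := by
  induction p using Polynomial.induction_on' with
  | add p q hp hq => simp [hp, hq]
  | monomial j a => simp

theorem coeff_skewTwist (u : L) (p : L[X]) (j : ℕ) :
    (skewTwist σ u p).coeff j = p.coeff j * (σ ^ j) u := by
  induction p using Polynomial.induction_on' with
  | add p q hp hq => simp [hp, hq, add_mul]
  | monomial i a =>
    by_cases hij : i = j <;> simp [skewTwist, coeff_monomial, hij]

theorem skewEval_skewTwist (u : L) (p : L[X]) :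
    skewEval σ (skewTwist σ u p) = skewEval σ p ∘ₗ LinearMap.mulLeft K u := by
  induction p using Polynomial.induction_on' with
  | add p q hp hq => simp [hp, hq, LinearMap.add_comp]
  | monomial j a =>
    ext x
    simp [skewTwist, mul_assoc]

end

section
variable {σ : L ≃ₐ[K] L}

theorem finrank_ker_sub_one_le (hfix : ∀ x : L, σ x = x → x ∈ Set.range (algebraMap K L)) :
    finrank K (ker (σ.toLinearMap - 1)) ≤ 1 := by
  have hle : ker (σ.toLinearMap - 1) ≤ K ∙ (1 : L) := by
    intro x hx
    obtain ⟨a, rfl⟩ := hfix x (sub_eq_zero.mp hx)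
    exact Submodule.mem_span_singleton.mpr ⟨a, (Algebra.algebraMap_eq_smul_one a).symm⟩
  exact (Submodule.finrank_mono hle).trans (finrank_span_singleton one_ne_zero).le

theorem finrank_ker_skewEval_le [FiniteDimensional K L]
    (hfix : ∀ x : L, σ x = x → x ∈ Set.range (algebraMap K L)) {p : L[X]} (hp : p ≠ 0) :
    finrank K (ker (skewEval σ p)) ≤ p.natDegree := by
  induction h : p.natDegree using Nat.strong_induction_on generalizing p with
  | _ d ih =>
  by_cases hbot : ker (skewEval σ p) = ⊥
  · rw [hbot, finrank_bot]; exact Nat.zero_le _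
  obtain ⟨u, hu, hu0⟩ := Submodule.exists_mem_ne_zero_of_ne_bot hbot
  set t := skewTwist σ u p
  have ht0 : t ≠ 0 := by
    intro ht
    have hd := congrArg (coeff · d) ht
    simp only [t, coeff_skewTwist, coeff_zero, ← h] at hd
    exact mul_ne_zero (leadingCoeff_ne_zero.mpr hp) ((_root_.map_ne_zero _).mpr hu0) hd
  have htdeg : t.natDegree ≤ d := by
    rw [natDegree_le_iff_coeff_eq_zero]
    intro j hj
    rw [coeff_skewTwist, coeff_eq_zero_of_natDegree_lt (h ▸ hj), zero_mul]
  have hker : finrank K (ker (skewEval σ t)) = finrank K (ker (skewEval σ p)) := by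
    let e : L ≃ₗ[K] L := (LinearEquiv.smulOfNeZero L L u hu0).restrictScalars K
    have : ker (skewEval σ t) = (ker (skewEval σ p)).comap (e : L →ₗ[K] L) := by
      rw [skewEval_skewTwist, ker_comp]; rfl
    rw [this, Submodule.comap_equiv_eq_map_symm, LinearEquiv.finrank_map_eq]
  have hroot : t.IsRoot 1 := by
    rw [IsRoot, ← skewEval_apply_one σ, skewEval_skewTwist]
    simpa using hu
  set q := t /ₘ (X - C 1)
  have hq : q * (X - C 1) = t := by
    rw [mul_comm]; exact mul_divByMonic_eq_iff_isRoot.mpr hroot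
  have hq0 : q ≠ 0 := by
    intro hq0
    rw [hq0, zero_mul] at hq
    exact ht0 hq.symm
  have hqdeg : q.natDegree + 1 ≤ d := by
    rw [← hq, natDegree_mul hq0 (X_sub_C_ne_zero 1), natDegree_X_sub_C] at htdeg
    exact htdeg
  calc finrank K (ker (skewEval σ p))
      = finrank K (ker (skewEval σ q ∘ₗ (σ.toLinearMap - 1))) := by
        rw [← hker, ← hq, C_1, mul_sub, mul_one, map_sub, skewEval_mul_X, LinearMap.comp_sub,
          Module.End.one_eq_id, LinearMap.comp_id]
    _ ≤ finrank K (ker (skewEval σ q)) + finrank K (ker (σ.toLinearMap - 1)) :=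
        LinearMap.finrank_ker_comp_le _ _
    _ ≤ d := by
        have := ih _ (by omega) hq0 rfl
        have := finrank_ker_sub_one_le hfix
        omega

end

noncomputable def altFormSum (σ : L ≃ₐ[K] L) (k : ℕ) :
    (Fin k → L) →ₗ[K] L →ₗ[K] L →ₗ[K] K :=
  lsum K (fun _ => L) K fun i => galoisAltFormL (σ ^ ((i : ℕ) + 1))

noncomputable def altFormSumPoly (σ : L ≃ₐ[K] L) (k : ℕ) (b : Fin k → L) : L[X] :=
  ∑ i : Fin k, (monomial (k - 1 - i) ((σ ^ (k - 1 - i)) (b i))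
    - monomial (k + 1 + i) ((σ ^ k) (b i)))

section
variable (σ : L ≃ₐ[K] L) {k : ℕ}

theorem altFormSum_apply_eq_trace (b : Fin k → L) (x y : L) :
    altFormSum σ k b x y =
      Algebra.trace K L (skewEval σ (altFormSumPoly σ k b) x * (σ ^ k) y) := by
  have hlhs : altFormSum σ k b x y = ∑ i : Fin k,
      Algebra.trace K L (b i * (x * (σ ^ ((i : ℕ) + 1)) y - (σ ^ ((i : ℕ) + 1)) x * y)) := by
    simp only [altFormSum, LinearMap.lsum_apply, coe_sum, coe_comp, coe_proj, Finset.sum_apply,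
      Function.comp_apply, Function.eval]
    rfl
  have hrhs : skewEval σ (altFormSumPoly σ k b) x = ∑ i : Fin k,
      ((σ ^ (k - 1 - i)) (b i) * (σ ^ (k - 1 - i)) x - (σ ^ k) (b i) * (σ ^ (k + 1 + i)) x) := by
    simp only [altFormSumPoly, map_sum, map_sub, skewEval_monomial, coe_sum, Finset.sum_apply,
      LinearMap.sub_apply, LinearMap.smul_apply, AlgEquiv.toLinearMap_apply, smul_eq_mul]
  rw [hlhs, hrhs, Finset.sum_mul, map_sum]
  refine Finset.sum_congr rfl fun i _ => ?_
  have hy : (σ ^ (k - 1 - i)) ((σ ^ ((i : ℕ) + 1)) y) = (σ ^ k) y := by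
    rw [← AlgEquiv.mul_apply, ← pow_add]; congr 2; omega
  have hx : (σ ^ k) ((σ ^ ((i : ℕ) + 1)) x) = (σ ^ (k + 1 + i)) x := by
    rw [← AlgEquiv.mul_apply, ← pow_add]; congr 2; omega
  rw [mul_sub, map_sub, sub_mul, map_sub, ← Algebra.trace_eq_of_algEquiv (σ ^ (k - 1 - i)),
    ← Algebra.trace_eq_of_algEquiv (σ ^ k) (b i * _)]
  simp only [map_mul, hx, hy, mul_assoc]

theorem coeff_altFormSumPoly (b : Fin k → L) (i : Fin k) :
    (altFormSumPoly σ k b).coeff (k + 1 + i) = -(σ ^ k) (b i) := by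
  simp only [altFormSumPoly, Finset.sum_sub_distrib, coeff_sub, finsetSum_coeff, coeff_monomial,
    Nat.add_left_cancel_iff, Fin.val_inj, Finset.sum_ite_eq', Finset.mem_univ, if_true]
  rw [Finset.sum_eq_zero fun j _ => if_neg (by omega), zero_sub]

theorem natDegree_altFormSumPoly_le (b : Fin k → L) :
    (altFormSumPoly σ k b).natDegree ≤ 2 * k := by
  refine natDegree_sum_le_of_forall_le _ _ fun i _ => (natDegree_sub_le _ _).trans ?_
  have := i.isLt
  exact max_le ((natDegree_monomial_le _).trans (by omega))
    ((natDegree_monomial_le _).trans (by omega))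

theorem altFormSumPoly_ne_zero {b : Fin k → L} (hb : b ≠ 0) : altFormSumPoly σ k b ≠ 0 := by
  obtain ⟨i, hi⟩ := Function.ne_iff.mp hb
  intro h
  have := coeff_altFormSumPoly σ b i
  rw [h, coeff_zero, eq_comm, neg_eq_zero, _root_.map_eq_zero] at this
  exact hi this

theorem finrank_ker_altFormSum_le [FiniteDimensional K L] [Algebra.IsSeparable K L]
    (hfix : ∀ x : L, σ x = x → x ∈ Set.range (algebraMap K L)) {b : Fin k → L} (hb : b ≠ 0) :
    finrank K (ker (altFormSum σ k b)) ≤ 2 * k := by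
  rw [ker_eq_of_apply_eq_trace (σ ^ k) (altFormSum_apply_eq_trace σ b)]
  exact (finrank_ker_skewEval_le hfix (altFormSumPoly_ne_zero σ hb)).trans
    (natDegree_altFormSumPoly_le σ b)

end

theorem range_altFormSum (σ : L ≃ₐ[K] L) (k : ℕ) :
    range (altFormSum σ k) = ⨆ i : Fin k, range (galoisAltFormL (σ ^ ((i : ℕ) + 1))) :=
  range_lsum _

theorem statement16_general [FiniteDimensional K L] [IsGalois K L]
    (n m : ℕ) (hn : Module.finrank K L = n) (hnm : n = 2 * m + 2)
    (σ : L ≃ₐ[K] L) (hgen : ∀ τ : L ≃ₐ[K] L, τ ∈ Subgroup.zpowers σ)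
    (k : ℕ) (hkm : k ≤ m) :
    Module.finrank K
        ↥(⨆ i : Fin k, LinearMap.range (galoisAltFormL (σ ^ ((i : ℕ) + 1)))) = n * k ∧
    ∀ f ∈ (⨆ i : Fin k, LinearMap.range (galoisAltFormL (σ ^ ((i : ℕ) + 1)))),
      f ≠ 0 → n - 2 * k ≤ formRank f := by
  have hker : ∀ b ≠ 0, finrank K (ker (altFormSum σ k b)) ≤ 2 * k :=
    fun _ => finrank_ker_altFormSum_le σ fun _ => mem_range_algebraMap_of_apply_eq hgen
  have hinj : Function.Injective (altFormSum σ k) := by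
    refine (injective_iff_map_eq_zero _).mpr fun b hb => ?_
    by_contra hb0
    have := hker b hb0
    rw [hb, ker_zero, finrank_top, hn] at this
    omega
  rw [← range_altFormSum]
  refine ⟨?_, ?_⟩
  · simp [finrank_range_of_inj hinj, finrank_pi_fintype, hn, mul_comm]
  · rintro _ ⟨b, rfl⟩ hb
    have := hker b fun hb0 => hb (by rw [hb0, map_zero])
    unfold formRank
    omega

/-- for a cyclic extension of even degree `n = 2m+2` with Galois group
generated by `σ`, and `Aⁱ = {f_{b,σⁱ} : b ∈ L}`, for `1 ≤ k ≤ m` the subspace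
`A¹ ⊕ ⋯ ⊕ Aᵏ` has dimension `nk` and all its nonzero elements have rank
at least `n − 2k`. -/
theorem statement16 [FiniteDimensional K L] [IsGalois K L]
    (n m : ℕ) (hn : Module.finrank K L = n) (hnm : n = 2 * m + 2)
    (σ : L ≃ₐ[K] L) (hgen : ∀ τ : L ≃ₐ[K] L, τ ∈ Subgroup.zpowers σ)
    (k : ℕ) (hk1 : 1 ≤ k) (hkm : k ≤ m) :
    Module.finrank K
        ↥(⨆ i : Fin k, LinearMap.range (galoisAltFormL (σ ^ ((i : ℕ) + 1)))) = n * k ∧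
    ∀ f ∈ (⨆ i : Fin k, LinearMap.range (galoisAltFormL (σ ^ ((i : ℕ) + 1)))),
      f ≠ 0 → n - 2 * k ≤ formRank f :=
  statement16_general n m hn hnm σ hgen k hkm
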